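/- arXiv:1102.4088 — 5 statements merged into one kernel-verified Lean document; each statement's English description precedes it below -/
import Mathlib

section
/- Let Γ be an abelian group, A a Γ-graded ring, ᾱ = (α_1,…,α_m) ∈ Γ^m and δ̄ = (δ_1,…,δ_n) ∈ Γ^n. The following are equivalent: (1) A^m(ᾱ) and A^n(δ̄) are isomorphic as graded right A-modules; (2) A^m(−ᾱ) and A^n(−δ̄) are isomorphic as graded left A-modules; (3) there exist an n×m matrix a = (a_{ij}) over A with a_{ij} ∈ A_{δ_i − α_j} for all i, j, and an m×n matrix b = (b_{ij}) over A with b_{ij} ∈ A_{α_i − δ_j} for all i, j, such that a·b = I_n and b·a = I_m. -/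
/-!
Proposition (graded free modules): for a Γ-graded ring A, shift tuples
ᾱ ∈ Γ^m, δ̄ ∈ Γ^n, the following are equivalent:
(1) A^m(ᾱ) ≅ A^n(δ̄) as graded right A-modules,
(2) A^m(−ᾱ) ≅ A^n(−δ̄) as graded left A-modules,
(3) there are matrices a, b with homogeneous entries of the indicated degrees
    with a·b = 1 and b·a = 1.
-/

/-- A graded isomorphism `A^m(ᾱ) ≅ A^n(δ̄)` of shifted graded free *right*
`A`-modules: an additive bijection commuting with the right `A`-action which
maps the degree-`γ` component onto the degree-`γ` component, where
`A^m(ᾱ)_γ = {v | ∀ i, v i ∈ 𝒜 (γ + α i)}`. -/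
def GradedRightFreeIso {Γ : Type*} [AddCommGroup Γ] {A : Type*} [Ring A]
    (𝒜 : Γ → AddSubgroup A) {m n : ℕ} (α : Fin m → Γ) (δ : Fin n → Γ) : Prop :=
  ∃ φ : (Fin m → A) ≃+ (Fin n → A),
    (∀ (v : Fin m → A) (a : A), φ (fun i => v i * a) = fun j => φ v j * a) ∧
    ∀ (γ : Γ) (v : Fin m → A), (∀ i, v i ∈ 𝒜 (γ + α i)) ↔ ∀ j, φ v j ∈ 𝒜 (γ + δ j)

/-- A graded isomorphism `A^m(ᾱ) ≅ A^n(δ̄)` of shifted graded free *left*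
`A`-modules. -/
def GradedLeftFreeIso {Γ : Type*} [AddCommGroup Γ] {A : Type*} [Ring A]
    (𝒜 : Γ → AddSubgroup A) {m n : ℕ} (α : Fin m → Γ) (δ : Fin n → Γ) : Prop :=
  ∃ φ : (Fin m → A) ≃+ (Fin n → A),
    (∀ (v : Fin m → A) (a : A), φ (fun i => a * v i) = fun j => a * φ v j) ∧
    ∀ (γ : Γ) (v : Fin m → A), (∀ i, v i ∈ 𝒜 (γ + α i)) ↔ ∀ j, φ v j ∈ 𝒜 (γ + δ j)

/-!
A right-linear map `A^m → A^n` is left multiplication by the `n × m` matrix whose `j`-th column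
is the image of the basis vector `eⱼ`, and dually a left-linear map is right multiplication of row
vectors. Since `eⱼ` is homogeneous of degree `-αⱼ` in `A^m(ᾱ)`, such a map is graded exactly when
its `(i, j)` entry lies in `A_{δᵢ - αⱼ}`; so graded isomorphisms are the same as pairs of mutually
inverse matrices with homogeneous entries of these degrees. Negating the shifts turns the left
module degrees `(-δⱼ) - (-αᵢ)` into the right module degrees `αᵢ - δⱼ`.
-/

open Matrix

section Representation

variable {ι κ A F : Type*} [Fintype ι] [DecidableEq ι] [Semiring A]
  [FunLike F (ι → A) (κ → A)] [AddMonoidHomClass F (ι → A) (κ → A)]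

theorem exists_eq_mulVec_of_map_mul_right (f : F)
    (hf : ∀ (v : ι → A) (c : A), f (fun i => v i * c) = fun j => f v j * c) :
    ∃ M : Matrix κ ι A, ∀ v, f v = M *ᵥ v := by
  refine ⟨Matrix.of fun j i => f (Pi.single i 1) j, fun v => ?_⟩
  have hsingle : ∀ i, f (Pi.single i (v i)) = fun j => f (Pi.single i 1) j * v i := fun i => by
    rw [← hf]
    congr 1
    ext k
    simp [Pi.single_apply]
  ext j
  conv_lhs => rw [← Finset.univ_sum_single v]
  simp [map_sum, hsingle, mulVec, dotProduct]

theorem exists_eq_vecMul_of_map_mul_left (f : F)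
    (hf : ∀ (v : ι → A) (c : A), f (fun i => c * v i) = fun j => c * f v j) :
    ∃ M : Matrix ι κ A, ∀ v, f v = v ᵥ* M := by
  refine ⟨Matrix.of fun i j => f (Pi.single i 1) j, fun v => ?_⟩
  have hsingle : ∀ i, f (Pi.single i (v i)) = fun j => v i * f (Pi.single i 1) j := fun i => by
    rw [← hf]
    congr 1
    ext k
    simp [Pi.single_apply]
  ext j
  conv_lhs => rw [← Finset.univ_sum_single v]
  simp [map_sum, hsingle, vecMul, dotProduct]

end Representation

section MulVec

variable {ι κ A : Type*} [Fintype ι] [Semiring A]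

theorem Matrix.mulVec_mul_right (M : Matrix κ ι A) (v : ι → A) (c : A) :
    M *ᵥ (fun i => v i * c) = fun j => (M *ᵥ v) j * c :=
  M.mulVec_smul (MulOpposite.op c) v

def Matrix.mulVecAddEquivOfInv [DecidableEq ι] [Fintype κ] [DecidableEq κ]
    {M : Matrix κ ι A} {M' : Matrix ι κ A} (hMM' : M * M' = 1) (hM'M : M' * M = 1) :
    (ι → A) ≃+ (κ → A) where
  toFun := M.mulVec
  invFun := M'.mulVec
  left_inv v := by simp [mulVec_mulVec, hM'M]
  right_inv w := by simp [mulVec_mulVec, hMM']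
  map_add' := M.mulVec_add

end MulVec

section Homogeneous

variable {Γ ι κ A σ : Type*} [AddCommGroup Γ] [Semiring A] [SetLike σ A]
  [AddSubmonoidClass σ A] (𝒜 : Γ → σ) [SetLike.GradedMonoid 𝒜]

theorem Pi.single_one_mem_shift [DecidableEq ι] (β : ι → Γ) (i k : ι) :
    (Pi.single i 1 : ι → A) k ∈ 𝒜 (-β i + β k) := by
  rcases eq_or_ne k i with rfl | hki
  · simp [SetLike.one_mem_graded 𝒜]
  · simp [hki, zero_mem]

variable {𝒜} {α : ι → Γ} {δ : κ → Γ} {γ : Γ}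

theorem Matrix.mulVec_mem_shift [Fintype ι] {M : Matrix κ ι A}
    (hM : ∀ i j, M i j ∈ 𝒜 (δ i - α j)) {v : ι → A} (hv : ∀ j, v j ∈ 𝒜 (γ + α j)) (i : κ) :
    (M *ᵥ v) i ∈ 𝒜 (γ + δ i) :=
  sum_mem fun j _ => by
    have hdeg : δ i - α j + (γ + α j) = γ + δ i := by abel
    exact hdeg ▸ SetLike.mul_mem_graded (hM i j) (hv j)

theorem Matrix.vecMul_mem_shift [Fintype ι] {M : Matrix ι κ A}
    (hM : ∀ i j, M i j ∈ 𝒜 (δ j - α i)) {v : ι → A} (hv : ∀ i, v i ∈ 𝒜 (γ + α i)) (j : κ) :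
    (v ᵥ* M) j ∈ 𝒜 (γ + δ j) :=
  sum_mem fun i _ => by
    have hdeg : γ + α i + (δ j - α i) = γ + δ j := by abel
    exact hdeg ▸ SetLike.mul_mem_graded (hv i) (hM i j)

theorem Matrix.apply_mem_of_mulVec_mem_shift [Fintype ι] [DecidableEq ι] {M : Matrix κ ι A}
    (hM : ∀ γ (v : ι → A), (∀ j, v j ∈ 𝒜 (γ + α j)) → ∀ i, (M *ᵥ v) i ∈ 𝒜 (γ + δ i))
    (i : κ) (j : ι) : M i j ∈ 𝒜 (δ i - α j) := by
  simpa [neg_add_eq_sub] using hM (-α j) _ (Pi.single_one_mem_shift 𝒜 α j) i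

theorem Matrix.apply_mem_of_vecMul_mem_shift [Fintype ι] [DecidableEq ι] {M : Matrix ι κ A}
    (hM : ∀ γ (v : ι → A), (∀ i, v i ∈ 𝒜 (γ + α i)) → ∀ j, (v ᵥ* M) j ∈ 𝒜 (γ + δ j))
    (i : ι) (j : κ) : M i j ∈ 𝒜 (δ j - α i) := by
  simpa [neg_add_eq_sub] using hM (-α i) _ (Pi.single_one_mem_shift 𝒜 α i) j

end Homogeneous

section FreeIso

variable {Γ A : Type*} [AddCommGroup Γ] [Ring A] {𝒜 : Γ → AddSubgroup A}
  [SetLike.GradedMonoid 𝒜] {m n : ℕ} {α : Fin m → Γ} {δ : Fin n → Γ}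

theorem GradedRightFreeIso.exists_matrix (h : GradedRightFreeIso 𝒜 α δ) :
    ∃ (a : Matrix (Fin n) (Fin m) A) (b : Matrix (Fin m) (Fin n) A),
      (∀ i j, a i j ∈ 𝒜 (δ i - α j)) ∧ (∀ i j, b i j ∈ 𝒜 (α i - δ j)) ∧
      a * b = 1 ∧ b * a = 1 := by
  obtain ⟨φ, hφ_mul, hφ_deg⟩ := h
  have hψ_mul : ∀ (w : Fin n → A) (c : A), φ.symm (fun j => w j * c) = fun i => φ.symm w i * c :=
    fun w c => φ.symm_apply_eq.2 (by rw [hφ_mul, φ.apply_symm_apply])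
  obtain ⟨a, ha⟩ := exists_eq_mulVec_of_map_mul_right φ hφ_mul
  obtain ⟨b, hb⟩ := exists_eq_mulVec_of_map_mul_right φ.symm hψ_mul
  refine ⟨a, b, apply_mem_of_mulVec_mem_shift fun γ v hv => ha v ▸ (hφ_deg γ v).1 hv,
    apply_mem_of_mulVec_mem_shift fun γ w hw => hb w ▸ (hφ_deg γ _).2 (by simpa using hw),
    ext_iff_mulVec.2 fun w => ?_, ext_iff_mulVec.2 fun v => ?_⟩
  · rw [← mulVec_mulVec, ← hb, ← ha, φ.apply_symm_apply, one_mulVec]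
  · rw [← mulVec_mulVec, ← ha, ← hb, φ.symm_apply_apply, one_mulVec]

theorem GradedLeftFreeIso.exists_matrix (h : GradedLeftFreeIso 𝒜 α δ) :
    ∃ (a : Matrix (Fin n) (Fin m) A) (b : Matrix (Fin m) (Fin n) A),
      (∀ i j, a i j ∈ 𝒜 (α j - δ i)) ∧ (∀ i j, b i j ∈ 𝒜 (δ j - α i)) ∧
      a * b = 1 ∧ b * a = 1 := by
  obtain ⟨φ, hφ_mul, hφ_deg⟩ := h
  have hψ_mul : ∀ (w : Fin n → A) (c : A), φ.symm (fun j => c * w j) = fun i => c * φ.symm w i :=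
    fun w c => φ.symm_apply_eq.2 (by rw [hφ_mul, φ.apply_symm_apply])
  obtain ⟨b, hb⟩ := exists_eq_vecMul_of_map_mul_left φ hφ_mul
  obtain ⟨a, ha⟩ := exists_eq_vecMul_of_map_mul_left φ.symm hψ_mul
  refine ⟨a, b,
    apply_mem_of_vecMul_mem_shift fun γ w hw => ha w ▸ (hφ_deg γ _).2 (by simpa using hw),
    apply_mem_of_vecMul_mem_shift fun γ v hv => hb v ▸ (hφ_deg γ v).1 hv,
    ext_iff_vecMul.2 fun w => ?_, ext_iff_vecMul.2 fun v => ?_⟩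
  · rw [← vecMul_vecMul, ← ha, ← hb, φ.apply_symm_apply, vecMul_one]
  · rw [← vecMul_vecMul, ← hb, ← ha, φ.symm_apply_apply, vecMul_one]

theorem gradedRightFreeIso_of_matrix
    {a : Matrix (Fin n) (Fin m) A} {b : Matrix (Fin m) (Fin n) A}
    (ha : ∀ i j, a i j ∈ 𝒜 (δ i - α j)) (hb : ∀ i j, b i j ∈ 𝒜 (α i - δ j))
    (hab : a * b = 1) (hba : b * a = 1) : GradedRightFreeIso 𝒜 α δ :=
  ⟨mulVecAddEquivOfInv hab hba, a.mulVec_mul_right, fun _ v =>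
    ⟨fun hv => mulVec_mem_shift ha hv, fun hw => by
      simpa [mulVecAddEquivOfInv, mulVec_mulVec, hba] using mulVec_mem_shift hb hw⟩⟩

theorem gradedLeftFreeIso_of_matrix
    {a : Matrix (Fin n) (Fin m) A} {b : Matrix (Fin m) (Fin n) A}
    (ha : ∀ i j, a i j ∈ 𝒜 (α j - δ i)) (hb : ∀ i j, b i j ∈ 𝒜 (δ j - α i))
    (hab : a * b = 1) (hba : b * a = 1) : GradedLeftFreeIso 𝒜 α δ :=
  let φ := toLinearEquivRight'OfInv hab hba
  ⟨φ.toAddEquiv, fun v c => map_smul φ c v, fun _ v =>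
    ⟨fun hv => vecMul_mem_shift hb hv, fun hw => by
      simpa [φ, toLinearEquivRight'OfInv, vecMul_vecMul, hba] using vecMul_mem_shift ha hw⟩⟩

end FreeIso

theorem gradedFreeIso_tfae {Γ : Type*} [AddCommGroup Γ] [DecidableEq Γ]
    {A : Type*} [Ring A] (𝒜 : Γ → AddSubgroup A) [GradedRing 𝒜]
    {m n : ℕ} (α : Fin m → Γ) (δ : Fin n → Γ) :
    List.TFAE
      [ GradedRightFreeIso 𝒜 α δ,
        GradedLeftFreeIso 𝒜 (fun i => -α i) (fun j => -δ j),
        ∃ (a : Matrix (Fin n) (Fin m) A) (b : Matrix (Fin m) (Fin n) A),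
          (∀ i j, a i j ∈ 𝒜 (δ i - α j)) ∧ (∀ i j, b i j ∈ 𝒜 (α i - δ j)) ∧
          a * b = 1 ∧ b * a = 1 ] := by
  tfae_have 1 → 3 := GradedRightFreeIso.exists_matrix
  tfae_have 3 → 1 := fun ⟨a, b, ha, hb, hab, hba⟩ => gradedRightFreeIso_of_matrix ha hb hab hba
  tfae_have 2 → 3 := fun h => by simpa only [neg_sub_neg] using h.exists_matrix
  tfae_have 3 → 2 := fun ⟨a, b, ha, hb, hab, hba⟩ =>
    gradedLeftFreeIso_of_matrix (by simpa only [neg_sub_neg]) (by simpa only [neg_sub_neg]) hab hba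
  tfae_finish
end

section
/- Let Γ be an abelian group, A a Γ-graded ring and α ∈ Γ. The following are equivalent: (1) A(α) ≅ A as graded right A-modules; (2) A(−α) ≅ A as graded right A-modules; (3) A(α) ≅ A as graded left A-modules; (4) A(−α) ≅ A as graded left A-modules; (5) there exists an invertible element of A which is homogeneous of degree α. -/
/-!
Corollary: for a Γ-graded ring A and α ∈ Γ, TFAE:
(1) A(α) ≅ A as graded right A-modules, (2) A(−α) ≅ A as graded right
A-modules, (3) A(α) ≅ A as graded left A-modules, (4) A(−α) ≅ A as graded
left A-modules, (5) there is an invertible homogeneous element of degree α.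
-/

/-- A graded isomorphism `A(α) ≅ A` of *right* `A`-modules: an additive
bijection commuting with the right `A`-action mapping each component
`A(α)_γ = A_{γ+α}` onto `A_γ`. -/
def GradedRightShiftIsoSelf {Γ : Type*} [AddCommGroup Γ] {A : Type*} [Ring A]
    (𝒜 : Γ → AddSubgroup A) (α : Γ) : Prop :=
  ∃ φ : A ≃+ A,
    (∀ x a : A, φ (x * a) = φ x * a) ∧
    ∀ (γ : Γ) (x : A), x ∈ 𝒜 (γ + α) ↔ φ x ∈ 𝒜 γ

/-- A graded isomorphism `A(α) ≅ A` of *left* `A`-modules. -/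
def GradedLeftShiftIsoSelf {Γ : Type*} [AddCommGroup Γ] {A : Type*} [Ring A]
    (𝒜 : Γ → AddSubgroup A) (α : Γ) : Prop :=
  ∃ φ : A ≃+ A,
    (∀ a x : A, φ (a * x) = a * φ x) ∧
    ∀ (γ : Γ) (x : A), x ∈ 𝒜 (γ + α) ↔ φ x ∈ 𝒜 γ

/-!
A graded isomorphism `φ : A(α) → A` of right `A`-modules is left multiplication by `u = φ 1`;
bijectivity makes `u` a unit, and `1 ∈ A(α)_{-α}` puts `u` in `A_{-α}`. Conversely left
multiplication by a homogeneous unit of degree `-α` is such an isomorphism, because the inverse of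
a homogeneous unit is homogeneous of the opposite degree. Left modules are symmetric, with right
multiplication, and `u ↦ u⁻¹` trades degree `α` for `-α`.
-/

open DirectSum

section Monoid

variable {M : Type*} [Monoid M]

theorem isUnit_apply_one_of_map_mul_right (φ : M ≃ M) (hφ : ∀ x a, φ (x * a) = φ x * a) :
    IsUnit (φ 1) := by
  have hφ_eq : ∀ x, φ x = φ 1 * x := fun x => by simpa using hφ 1 x
  obtain ⟨v, hv⟩ := φ.surjective 1
  have hright : φ 1 * v = 1 := by rw [← hφ_eq, hv]
  have hleft : v * φ 1 = 1 := φ.injective <| by rw [hφ_eq, ← mul_assoc, hright, one_mul]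
  exact ⟨⟨φ 1, v, hright, hleft⟩, rfl⟩

theorem isUnit_apply_one_of_map_mul_left (φ : M ≃ M) (hφ : ∀ a x, φ (a * x) = a * φ x) :
    IsUnit (φ 1) := by
  have hφ_eq : ∀ x, φ x = x * φ 1 := fun x => by simpa using hφ x 1
  obtain ⟨v, hv⟩ := φ.surjective 1
  have hleft : v * φ 1 = 1 := by rw [← hφ_eq, hv]
  have hright : φ 1 * v = 1 := φ.injective <| by rw [hφ_eq, mul_assoc, hleft, mul_one]
  exact ⟨⟨φ 1, v, hright, hleft⟩, rfl⟩

end Monoid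

section GradedRing

variable {ι A σ : Type*} [AddGroup ι] [DecidableEq ι] [Semiring A] [SetLike σ A]
  [AddSubmonoidClass σ A] (𝒜 : ι → σ) [GradedRing 𝒜]

/-- The degree `-α` component `w` of `u⁻¹` satisfies `u * w = (u * u⁻¹)₀ = 1`, so `w = u⁻¹`. -/
theorem Units.inv_mem_graded_neg {u : Aˣ} {α : ι} (hu : (u : A) ∈ 𝒜 α) :
    ((u⁻¹ : Aˣ) : A) ∈ 𝒜 (-α) := by
  have hcomp : (u : A) * decompose 𝒜 ((u⁻¹ : Aˣ) : A) (-α) = 1 := by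
    rw [← coe_decompose_mul_add_of_left_mem 𝒜 hu, add_neg_cancel, Units.mul_inv,
      decompose_of_mem_same 𝒜 SetLike.GradedOne.one_mem]
  rw [Units.inv_eq_of_mul_eq_one_right hcomp]
  exact SetLike.coe_mem _

theorem Units.mul_mem_graded_iff {u : Aˣ} {β : ι} (hu : (u : A) ∈ 𝒜 β) {γ : ι} {x : A} :
    (u : A) * x ∈ 𝒜 (β + γ) ↔ x ∈ 𝒜 γ :=
  ⟨fun h => by simpa using SetLike.mul_mem_graded (Units.inv_mem_graded_neg 𝒜 hu) h,
    SetLike.mul_mem_graded hu⟩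

theorem Units.mem_graded_mul_iff {u : Aˣ} {β : ι} (hu : (u : A) ∈ 𝒜 β) {γ : ι} {x : A} :
    x * (u : A) ∈ 𝒜 (γ + β) ↔ x ∈ 𝒜 γ :=
  ⟨fun h => by simpa using SetLike.mul_mem_graded h (Units.inv_mem_graded_neg 𝒜 hu),
    (SetLike.mul_mem_graded · hu)⟩

theorem exists_unit_mem_graded_neg_iff {α : ι} :
    (∃ u : Aˣ, (u : A) ∈ 𝒜 (-α)) ↔ ∃ u : Aˣ, (u : A) ∈ 𝒜 α :=
  ⟨fun ⟨u, hu⟩ => ⟨u⁻¹, by simpa using Units.inv_mem_graded_neg 𝒜 hu⟩,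
    fun ⟨u, hu⟩ => ⟨u⁻¹, Units.inv_mem_graded_neg 𝒜 hu⟩⟩

end GradedRing

section ShiftIso

variable {Γ A : Type*} [AddCommGroup Γ] [DecidableEq Γ] [Ring A] (𝒜 : Γ → AddSubgroup A)
  [GradedRing 𝒜]

theorem gradedRightShiftIsoSelf_iff {α : Γ} :
    GradedRightShiftIsoSelf 𝒜 α ↔ ∃ u : Aˣ, (u : A) ∈ 𝒜 (-α) := by
  constructor
  · rintro ⟨φ, hmul, hgr⟩
    obtain ⟨u, hu⟩ := isUnit_apply_one_of_map_mul_right φ.toEquiv hmul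
    refine ⟨u, hu ▸ (hgr (-α) 1).mp ?_⟩
    rw [neg_add_cancel]
    exact SetLike.GradedOne.one_mem
  · rintro ⟨u, hu⟩
    refine ⟨AddAut.mulLeft u, fun x a => by simp [Units.smul_def, mul_assoc], fun γ x => ?_⟩
    rw [← Units.mul_mem_graded_iff 𝒜 hu, show -α + (γ + α) = γ by abel]
    rfl

theorem gradedLeftShiftIsoSelf_iff {α : Γ} :
    GradedLeftShiftIsoSelf 𝒜 α ↔ ∃ u : Aˣ, (u : A) ∈ 𝒜 (-α) := by
  constructor
  · rintro ⟨φ, hmul, hgr⟩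
    obtain ⟨u, hu⟩ := isUnit_apply_one_of_map_mul_left φ.toEquiv hmul
    refine ⟨u, hu ▸ (hgr (-α) 1).mp ?_⟩
    rw [neg_add_cancel]
    exact SetLike.GradedOne.one_mem
  · rintro ⟨u, hu⟩
    refine ⟨AddAut.mulRight u, fun a x => by simp [mul_assoc], fun γ x => ?_⟩
    rw [← Units.mem_graded_mul_iff 𝒜 hu, add_neg_cancel_right]
    rfl

end ShiftIso

theorem gradedShiftIsoSelf_tfae {Γ : Type*} [AddCommGroup Γ] [DecidableEq Γ]
    {A : Type*} [Ring A] (𝒜 : Γ → AddSubgroup A) [GradedRing 𝒜] (α : Γ) :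
    List.TFAE
      [ GradedRightShiftIsoSelf 𝒜 α,
        GradedRightShiftIsoSelf 𝒜 (-α),
        GradedLeftShiftIsoSelf 𝒜 α,
        GradedLeftShiftIsoSelf 𝒜 (-α),
        ∃ u : Aˣ, (u : A) ∈ 𝒜 α ] := by
  have hunit := exists_unit_mem_graded_neg_iff 𝒜 (α := α)
  tfae_have 1 ↔ 5 := (gradedRightShiftIsoSelf_iff 𝒜).trans hunit
  tfae_have 2 ↔ 5 := by simpa using gradedRightShiftIsoSelf_iff 𝒜 (α := -α)
  tfae_have 3 ↔ 5 := (gradedLeftShiftIsoSelf_iff 𝒜).trans hunit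
  tfae_have 4 ↔ 5 := by simpa using gradedLeftShiftIsoSelf_iff 𝒜 (α := -α)
  tfae_finish
end

section
/- Let Γ be an abelian group and A a Γ-graded field with support Γ_A = {γ ∈ Γ : A_γ ≠ 0}. Let ᾱ = (α_1,…,α_m) ∈ Γ^m and δ̄ = (δ_1,…,δ_n) ∈ Γ^n. Then A^m(ᾱ) and A^n(δ̄) are isomorphic as graded right A-modules if and only if m = n and there exists a bijection σ : {1,…,m} → {1,…,n} such that α_i − δ_{σ(i)} ∈ Γ_A for all i. -/
/-!
A graded isomorphism is in particular `A`-linear, so `m = n` by invariance of rank. The matrix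
of its inverse has `(i, j)` entry homogeneous of degree `α i - δ j`, and a nonzero term of its
(nonzero) determinant picks out a permutation `σ` whose entries `(i, σ i)` are all nonzero, so
`α i - δ (σ i)` lies in the support. Conversely, a nonzero homogeneous element of degree
`α i - δ (σ i)` is a unit whose inverse is homogeneous, and rescaling the coordinates by these
units followed by permuting them along `σ` is a graded isomorphism.
-/

theorem Units.coe_inv_mem_graded {ι A σ : Type*} [AddGroup ι] [DecidableEq ι] [Semiring A]
    [SetLike σ A] [AddSubmonoidClass σ A] (𝒜 : ι → σ) [GradedRing 𝒜] {i : ι} {u : Aˣ}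
    (hu : (u : A) ∈ 𝒜 i) : (↑u⁻¹ : A) ∈ 𝒜 (-i) := by
  have h : (u : A) * (DirectSum.decompose 𝒜 (↑u⁻¹ : A) (-i) : A) = 1 := by
    rw [← DirectSum.coe_decompose_mul_add_of_left_mem 𝒜 hu, Units.mul_inv, add_neg_cancel,
      DirectSum.decompose_of_mem_same 𝒜 SetLike.GradedOne.one_mem]
  rw [Units.inv_eq_of_mul_eq_one_right h]
  exact SetLike.coe_mem _

theorem Matrix.exists_perm_forall_ne_zero_of_det_ne_zero {n R : Type*} [Fintype n]
    [DecidableEq n] [CommRing R] {M : Matrix n n R} (h : M.det ≠ 0) :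
    ∃ σ : Equiv.Perm n, ∀ i, M i (σ i) ≠ 0 := by
  rw [← det_transpose, det_apply] at h
  obtain ⟨σ, -, hσ⟩ := Finset.exists_ne_zero_of_sum_ne_zero h
  refine ⟨σ, fun i hi => hσ ?_⟩
  rw [Finset.prod_eq_zero (Finset.mem_univ i) (by simpa using hi), smul_zero]

namespace GradedRightFreeIso

variable {Γ A : Type*} [AddCommGroup Γ]

theorem trans [Ring A] {𝒜 : Γ → AddSubgroup A} {l m n : ℕ} {α : Fin l → Γ} {β : Fin m → Γ}
    {δ : Fin n → Γ} (h₁ : GradedRightFreeIso 𝒜 α β) (h₂ : GradedRightFreeIso 𝒜 β δ) :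
    GradedRightFreeIso 𝒜 α δ := by
  obtain ⟨φ, hφ, gφ⟩ := h₁
  obtain ⟨ψ, hψ, gψ⟩ := h₂
  exact ⟨φ.trans ψ, fun v a => by simp [hφ, hψ], fun γ v => (gφ γ v).trans (gψ γ (φ v))⟩

theorem comp_equiv [Ring A] (𝒜 : Γ → AddSubgroup A) {m n : ℕ} (σ : Fin m ≃ Fin n)
    (δ : Fin n → Γ) : GradedRightFreeIso 𝒜 (δ ∘ σ) δ :=
  ⟨(LinearEquiv.funCongrLeft A A σ.symm).toAddEquiv, fun _ _ => rfl, fun γ v => by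
    simpa using σ.forall_congr_right (q := fun j => v (σ.symm j) ∈ 𝒜 (γ + δ j))⟩

theorem of_units [Ring A] [DecidableEq Γ] (𝒜 : Γ → AddSubgroup A) [GradedRing 𝒜] {m : ℕ}
    {α β : Fin m → Γ} (u : Fin m → Aˣ) (hu : ∀ i, (u i : A) ∈ 𝒜 (α i - β i)) :
    GradedRightFreeIso 𝒜 α β := by
  refine ⟨{ toFun := fun v i => ↑(u i)⁻¹ * v i
            invFun := fun w i => u i * w i
            left_inv := fun v => funext fun i => (u i).mul_inv_cancel_left (v i)
            right_inv := fun w => funext fun i => (u i).inv_mul_cancel_left (w i)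
            map_add' := fun v w => funext fun i => mul_add _ _ _ },
    fun v a => funext fun i => (mul_assoc _ _ _).symm,
    fun γ v => ⟨fun hv i => ?_, fun hv i => ?_⟩⟩
  · show ↑(u i)⁻¹ * v i ∈ 𝒜 (γ + β i)
    convert SetLike.mul_mem_graded (Units.coe_inv_mem_graded 𝒜 (hu i)) (hv i) using 2
    abel
  · have h := SetLike.mul_mem_graded (hu i) (show ↑(u i)⁻¹ * v i ∈ _ from hv i)
    rw [Units.mul_inv_cancel_left] at h
    convert h using 2
    abel

theorem exists_linearEquiv [CommRing A] {𝒜 : Γ → AddSubgroup A} {m n : ℕ} {α : Fin m → Γ}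
    {δ : Fin n → Γ} (h : GradedRightFreeIso 𝒜 α δ) :
    ∃ e : (Fin m → A) ≃ₗ[A] (Fin n → A),
      ∀ γ v, (∀ i, v i ∈ 𝒜 (γ + α i)) ↔ ∀ j, e v j ∈ 𝒜 (γ + δ j) := by
  obtain ⟨φ, hφ, hgr⟩ := h
  refine ⟨{ φ with map_smul' := fun a v => ?_ }, hgr⟩
  have hv : a • v = fun i => v i * a := funext fun i => mul_comm a (v i)
  simp only [AddEquiv.toEquiv_eq_coe, Equiv.toFun_as_coe, EquivLike.coe_coe, hv, hφ]
  exact funext fun j => mul_comm _ _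

end GradedRightFreeIso

theorem AddEquiv.symm_single_one_mem_graded {Γ A : Type*} [AddCommGroup Γ] [Ring A]
    (𝒜 : Γ → AddSubgroup A) [SetLike.GradedOne 𝒜] {m n : ℕ} {α : Fin m → Γ} {δ : Fin n → Γ}
    (e : (Fin m → A) ≃+ (Fin n → A))
    (he : ∀ γ v, (∀ i, v i ∈ 𝒜 (γ + α i)) ↔ ∀ j, e v j ∈ 𝒜 (γ + δ j)) (i : Fin m) (j : Fin n) :
    e.symm (Pi.single j 1) i ∈ 𝒜 (α i - δ j) := by
  rw [sub_eq_neg_add]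
  refine (he (-δ j) _).2 (fun k => ?_) i
  rw [e.apply_symm_apply]
  rcases eq_or_ne k j with rfl | hk
  · simpa using SetLike.GradedOne.one_mem
  · simp [hk]

theorem gradedField_free_iso_iff_support_permutation
    {Γ : Type*} [AddCommGroup Γ] [DecidableEq Γ]
    {A : Type*} [CommRing A] [Nontrivial A]
    (𝒜 : Γ → AddSubgroup A) [GradedRing 𝒜]
    (hinv : ∀ (γ : Γ) (a : A), a ∈ 𝒜 γ → a ≠ 0 → IsUnit a)
    {m n : ℕ} (α : Fin m → Γ) (δ : Fin n → Γ) :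
    GradedRightFreeIso 𝒜 α δ ↔
      (m = n ∧ ∃ σ : Fin m ≃ Fin n, ∀ i, 𝒜 (α i - δ (σ i)) ≠ ⊥) := by
  constructor
  · intro h
    obtain ⟨e, he⟩ := h.exists_linearEquiv
    obtain rfl : m = n := by simpa using e.finrank_eq
    set P := LinearMap.toMatrix' (e.symm : (Fin m → A) →ₗ[A] Fin m → A)
    have hdet : P.det ≠ 0 := by
      rw [LinearMap.det_toMatrix']
      exact e.symm.isUnit_det'.ne_zero
    obtain ⟨σ, hσ⟩ := Matrix.exists_perm_forall_ne_zero_of_det_ne_zero hdet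
    refine ⟨rfl, σ, fun i hbot => hσ i ?_⟩
    have hP : P i (σ i) ∈ 𝒜 (α i - δ (σ i)) :=
      e.toAddEquiv.symm_single_one_mem_graded 𝒜 he i (σ i)
    rwa [hbot, AddSubgroup.mem_bot] at hP
  · rintro ⟨-, σ, hσ⟩
    have hunit : ∀ i, ∃ u : Aˣ, (u : A) ∈ 𝒜 (α i - δ (σ i)) := fun i => by
      obtain ⟨⟨a, ha⟩, ha0⟩ := (AddSubgroup.ne_bot_iff_exists_ne_zero).1 (hσ i)
      exact ⟨(hinv _ a ha (by simpa using ha0)).unit, ha⟩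
    choose u hu using hunit
    exact (GradedRightFreeIso.of_units 𝒜 u hu).trans (GradedRightFreeIso.comp_equiv 𝒜 σ δ)
end

section
/- Let n be a prime number, r a natural number, and let a, b be r×r matrices with entries in the subring ℤ[1/n] = {q ∈ ℚ : q = x/n^k for some x ∈ ℤ, k ∈ ℕ} of ℚ, such that every entry of a and every entry of b is nonnegative, a·b = I_r and b·a = I_r. Then a is a generalized permutation matrix whose nonzero entries are integer powers of n: there exist a permutation σ of {1,…,r} and integers c_1,…,c_r ∈ ℤ such that a_{i,σ(i)} = n^{c_i} for all i and a_{ij} = 0 whenever j ≠ σ(i). -/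
/-!
If `a b = b a = 1` with `a, b ≥ 0` entrywise, every off-diagonal entry of `a b` is a sum of
nonnegative terms `a i j * b j k` that vanishes, so a nonzero `a i j` forces row `j` of `b` to be
supported at `i`, whence `b j i * a i j = 1`; applying the same argument to `b a` shows row `i` of
`a` is supported at `j`. Thus `a` is a generalized permutation matrix whose nonzero entries are
units of `ℤ[1/n]`, and the positive units of `ℤ[1/n]` are the integer powers of the prime `n`.
-/

namespace Matrix

variable {ι R : Type*} [Fintype ι] [DecidableEq ι] [Semiring R] {a b : Matrix ι ι R}

lemma exists_apply_ne_zero_of_mul_eq_one [Nontrivial R] (hab : a * b = 1) (i : ι) :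
    ∃ j, a i j ≠ 0 := by
  by_contra! h
  simpa [mul_apply, h] using congrFun (congrFun hab i) i

variable [PartialOrder R] [IsOrderedRing R]

lemma mul_apply_eq_zero_of_mul_eq_one (ha : ∀ i j, 0 ≤ a i j) (hb : ∀ i j, 0 ≤ b i j)
    (hab : a * b = 1) {i k : ι} (hik : i ≠ k) (j : ι) : a i j * b j k = 0 := by
  have hsum : ∑ l, a i l * b l k = 0 := by
    rw [← mul_apply, hab, one_apply_ne hik]
  exact (Finset.sum_eq_zero_iff_of_nonneg fun l _ => mul_nonneg (ha i l) (hb l k)).1 hsum j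
    (Finset.mem_univ j)

variable [NoZeroDivisors R]

lemma apply_eq_zero_of_mul_eq_one_of_ne_zero (ha : ∀ i j, 0 ≤ a i j) (hb : ∀ i j, 0 ≤ b i j)
    (hab : a * b = 1) {i j k : ι} (hij : a i j ≠ 0) (hki : k ≠ i) : b j k = 0 :=
  (mul_eq_zero.1 (mul_apply_eq_zero_of_mul_eq_one ha hb hab hki.symm j)).resolve_left hij

lemma mul_apply_eq_one_of_ne_zero (ha : ∀ i j, 0 ≤ a i j) (hb : ∀ i j, 0 ≤ b i j)
    (hab : a * b = 1) (hba : b * a = 1) {i j : ι} (hij : a i j ≠ 0) : b j i * a i j = 1 := by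
  calc b j i * a i j = ∑ l, b j l * a l j := by
        rw [Finset.sum_eq_single_of_mem i (Finset.mem_univ i) fun l _ hli => by
          rw [apply_eq_zero_of_mul_eq_one_of_ne_zero ha hb hab hij hli, zero_mul]]
    _ = 1 := by rw [← mul_apply, hba, one_apply_eq]

variable [Nontrivial R]

lemma apply_eq_zero_of_ne_zero_of_ne (ha : ∀ i j, 0 ≤ a i j) (hb : ∀ i j, 0 ≤ b i j)
    (hab : a * b = 1) (hba : b * a = 1) {i j k : ι} (hij : a i j ≠ 0) (hkj : k ≠ j) :
    a i k = 0 := by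
  have hji : b j i ≠ 0 :=
    left_ne_zero_of_mul_eq_one (mul_apply_eq_one_of_ne_zero ha hb hab hba hij)
  exact apply_eq_zero_of_mul_eq_one_of_ne_zero hb ha hba hji hkj

lemma exists_perm_of_nonneg_of_mul_eq_one (ha : ∀ i j, 0 ≤ a i j) (hb : ∀ i j, 0 ≤ b i j)
    (hab : a * b = 1) (hba : b * a = 1) :
    ∃ σ : Equiv.Perm ι, ∀ i, (∀ j, j ≠ σ i → a i j = 0) ∧ b (σ i) i * a i (σ i) = 1 := by
  choose f hf using exists_apply_ne_zero_of_mul_eq_one hab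
  have hf_inj : Function.Injective f := by
    intro i i' hii'
    by_contra hne
    have hzero : b (f i) i = 0 :=
      hii' ▸ apply_eq_zero_of_mul_eq_one_of_ne_zero ha hb hab (hf i') hne
    simpa [hzero] using mul_apply_eq_one_of_ne_zero ha hb hab hba (hf i)
  refine ⟨Equiv.ofBijective f (Finite.injective_iff_bijective.1 hf_inj), fun i => ⟨?_, ?_⟩⟩
  · exact fun j hj => apply_eq_zero_of_ne_zero_of_ne ha hb hab hba (hf i) hj
  · exact mul_apply_eq_one_of_ne_zero ha hb hab hba (hf i)

end Matrix

lemma Int.exists_pow_eq_of_mul_eq_prime_pow {p x y : ℤ} (hp : Prime p) (hp0 : 0 ≤ p) {N : ℕ}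
    (hxy : x * y = p ^ N) (hx : 0 ≤ x) : ∃ s : ℕ, x = p ^ s := by
  obtain ⟨s, -, hs⟩ := (dvd_prime_pow hp N).1 ⟨y, hxy.symm⟩
  exact ⟨s, Int.eq_of_associated_of_nonneg hs hx (pow_nonneg hp0 s)⟩

lemma Rat.exists_zpow_eq_of_mul_eq_one {n : ℕ} (hn : n.Prime) {q q' : ℚ} (hq : 0 ≤ q)
    (hq'q : q' * q = 1) (hqmem : ∃ (x : ℤ) (k : ℕ), q = x / (n : ℚ) ^ k)
    (hq'mem : ∃ (y : ℤ) (m : ℕ), q' = y / (n : ℚ) ^ m) : ∃ c : ℤ, q = (n : ℚ) ^ c := by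
  obtain ⟨x, k, rfl⟩ := hqmem
  obtain ⟨y, m, rfl⟩ := hq'mem
  have hn0 : (n : ℚ) ≠ 0 := by exact_mod_cast hn.ne_zero
  have hxy : x * y = (n : ℤ) ^ (k + m) := by
    qify
    field_simp at hq'q
    linear_combination hq'q
  have hx : 0 ≤ x := by
    have := mul_nonneg hq (pow_nonneg (Nat.cast_nonneg n) k)
    rwa [div_mul_cancel₀ _ (pow_ne_zero k hn0), Int.cast_nonneg_iff] at this
  obtain ⟨s, rfl⟩ := Int.exists_pow_eq_of_mul_eq_prime_pow (Nat.prime_iff_prime_int.1 hn)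
    (Int.natCast_nonneg n) hxy hx
  refine ⟨s - k, ?_⟩
  rw [zpow_sub₀ hn0, zpow_natCast, zpow_natCast]
  push_cast
  rfl

theorem nonneg_invertible_nadic_matrix_is_generalized_permutation
    (n : ℕ) (hn : n.Prime) (r : ℕ)
    (a b : Matrix (Fin r) (Fin r) ℚ)
    (hamem : ∀ i j, ∃ (x : ℤ) (k : ℕ), a i j = (x : ℚ) / (n : ℚ) ^ k)
    (hbmem : ∀ i j, ∃ (x : ℤ) (k : ℕ), b i j = (x : ℚ) / (n : ℚ) ^ k)
    (ha : ∀ i j, 0 ≤ a i j) (hb : ∀ i j, 0 ≤ b i j)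
    (hab : a * b = 1) (hba : b * a = 1) :
    ∃ (σ : Equiv.Perm (Fin r)) (c : Fin r → ℤ),
      ∀ i j, a i j = if j = σ i then (n : ℚ) ^ (c i) else 0 := by
  obtain ⟨σ, hσ⟩ := Matrix.exists_perm_of_nonneg_of_mul_eq_one ha hb hab hba
  have hpow : ∀ i, ∃ c : ℤ, a i (σ i) = (n : ℚ) ^ c := fun i =>
    Rat.exists_zpow_eq_of_mul_eq_one hn (ha i (σ i)) (hσ i).2 (hamem i (σ i)) (hbmem (σ i) i)
  choose c hc using hpow
  refine ⟨σ, c, fun i j => ?_⟩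
  split_ifs with hj
  · rw [hj, hc i]
  · exact (hσ i).1 j hj
end

section
/- Let X be a type, let F = (X →₀ ℕ) be the free commutative additive monoid on X, let G = (X →₀ ℤ) be the free abelian group on X, and let ι : F → G be the natural inclusion. Let I be an index type and r, s : I → F. Let c be the smallest additive monoid congruence on F containing all pairs (r_i, s_i) for i ∈ I, and let N be the subgroup of G generated by {ι(r_i) − ι(s_i) : i ∈ I}. Then the group completion (Grothendieck group) of the quotient monoid F/c is isomorphic, as an abelian group, to G/N, via an isomorphism that sends the image in the group completion of the class of f ∈ F to the coset ι(f) + N. -/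
/-!
Let F = (X →₀ ℕ) be the free commutative additive monoid on X, G = (X →₀ ℤ)
the free abelian group on X, and ι : F → G the natural inclusion.  For
relations r, s : I → F, let c be the additive monoid congruence on F generated
by the pairs (r i, s i) and N ≤ G the subgroup generated by ι(r i) − ι(s i).
Then G/N, together with the map F/c → G/N, [f] ↦ ι(f) + N, is the group
completion (Grothendieck group) of F/c: this is expressed by the universal
property of group completion.
-/

/-- The natural inclusion of the free commutative monoid on `X` into the free
abelian group on `X`. -/
noncomputable def finsuppNatToInt (X : Type*) : (X →₀ ℕ) →+ (X →₀ ℤ) :=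
  Finsupp.mapRange.addMonoidHom (Nat.castAddMonoidHom ℤ)

/-!
Homomorphisms `G ⧸ N →+ H` into an abelian group `H` are the homomorphisms `G →+ H` killing
`N`. Since `X →₀ ℤ` is the group completion of `X →₀ ℕ`, these are the homomorphisms
`F →+ H` identifying each `r i` with `s i`, i.e. the homomorphisms `F ⧸ c →+ H`.
-/

open Finsupp

@[simp]
theorem finsuppNatToInt_single {X : Type*} (x : X) (n : ℕ) :
    finsuppNatToInt X (single x n) = single x (n : ℤ) := by
  simp [finsuppNatToInt]

theorem existsUnique_comp_finsuppNatToInt {X H : Type*} [AddCommGroup H]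
    (g : (X →₀ ℕ) →+ H) : ∃! h : (X →₀ ℤ) →+ H, h.comp (finsuppNatToInt X) = g := by
  refine ⟨liftAddHom fun x => zmultiplesHom H (g (single x 1)), ?_, fun h hh => ?_⟩
  · ext x
    simp
  · ext x
    simp [← hh]

section Presentation

variable {M G H I : Type*} [AddCommMonoid M] [AddCommGroup G] [AddCommGroup H]

abbrev relationCon (r s : I → M) : AddCon M :=
  addConGen fun f g => ∃ i, r i = f ∧ s i = g

abbrev relationSubgroup (ι : M →+ G) (r s : I → M) : AddSubgroup G :=
  AddSubgroup.closure (Set.range fun i => ι (r i) - ι (s i))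

theorem relationCon_mk'_eq (r s : I → M) (i : I) :
    (relationCon r s).mk' (r i) = (relationCon r s).mk' (s i) :=
  (AddCon.eq _).2 (AddConGen.Rel.of _ _ ⟨i, rfl, rfl⟩)

theorem relationSubgroup_mk_eq (ι : M →+ G) (r s : I → M) (i : I) :
    (ι (r i) : G ⧸ relationSubgroup ι r s) = ι (s i) :=
  QuotientAddGroup.eq_iff_sub_mem.2 (AddSubgroup.subset_closure ⟨i, rfl⟩)

theorem relationCon_le_ker (ι : M →+ G) (r s : I → M) :
    relationCon r s ≤ AddCon.ker ((QuotientAddGroup.mk' (relationSubgroup ι r s)).comp ι) :=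
  AddCon.addConGen_le.2 fun _ _ ⟨i, hr, hs⟩ => hr ▸ hs ▸ relationSubgroup_mk_eq ι r s i

noncomputable def presentationHom (ι : M →+ G) (r s : I → M) :
    (relationCon r s).Quotient →+ G ⧸ relationSubgroup ι r s :=
  (relationCon r s).lift _ (relationCon_le_ker ι r s)

theorem presentationHom_comp_mk' (ι : M →+ G) (r s : I → M) :
    (presentationHom ι r s).comp (relationCon r s).mk' =
      (QuotientAddGroup.mk' (relationSubgroup ι r s)).comp ι :=
  AddCon.lift_comp_mk' _

theorem relationSubgroup_le_ker {ι : M →+ G} {r s : I → M} {h : G →+ H}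
    (hh : ∀ i, h (ι (r i)) = h (ι (s i))) : relationSubgroup ι r s ≤ h.ker :=
  (AddSubgroup.closure_le _).2 <| by
    rintro _ ⟨i, rfl⟩
    simp [hh i]

theorem existsUnique_comp_presentationHom {ι : M →+ G}
    (hι : ∀ g : M →+ H, ∃! h : G →+ H, h.comp ι = g) (r s : I → M)
    (g : (relationCon r s).Quotient →+ H) :
    ∃! h : (G ⧸ relationSubgroup ι r s) →+ H, h.comp (presentationHom ι r s) = g := by
  obtain ⟨h₀, hh₀, h₀_unique⟩ := hι (g.comp (relationCon r s).mk')
  have h₀_apply (f : M) : h₀ (ι f) = g ((relationCon r s).mk' f) := DFunLike.congr_fun hh₀ f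
  have hN : relationSubgroup ι r s ≤ h₀.ker :=
    relationSubgroup_le_ker fun i => by rw [h₀_apply, h₀_apply, relationCon_mk'_eq]
  refine ⟨QuotientAddGroup.lift _ h₀ hN, ?_, fun h hh => ?_⟩
  · ext f
    exact h₀_apply f
  · refine QuotientAddGroup.addMonoidHom_ext _ (h₀_unique _ ?_)
    rw [← hh]
    simp only [AddMonoidHom.comp_assoc, presentationHom_comp_mk']

end Presentation

theorem grothendieck_group_of_quotient_monoid
    {X : Type*} {I : Type*} (r s : I → (X →₀ ℕ))
    (c : AddCon (X →₀ ℕ))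
    (hc : c = addConGen (fun f g => ∃ i, r i = f ∧ s i = g))
    (N : AddSubgroup (X →₀ ℤ))
    (hN : N = AddSubgroup.closure
      (Set.range fun i => finsuppNatToInt X (r i) - finsuppNatToInt X (s i))) :
    ∃ ψ : c.Quotient →+ (X →₀ ℤ) ⧸ N,
      (∀ f : X →₀ ℕ, ψ (c.mk' f) = QuotientAddGroup.mk (finsuppNatToInt X f)) ∧
      (∀ (H : Type*) [AddCommGroup H] (g : c.Quotient →+ H),
        ∃! h : ((X →₀ ℤ) ⧸ N) →+ H, h.comp ψ = g) := by
  subst hc hN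
  exact ⟨presentationHom (finsuppNatToInt X) r s, fun _ => rfl, fun _ _ =>
    existsUnique_comp_presentationHom existsUnique_comp_finsuppNatToInt r s⟩
end
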